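/- arXiv:1909.10586 — 4 statements merged into one kernel-verified Lean document; each statement's English description precedes it below -/
import Mathlib

section
/- Let g, h : F_2^n → F_2 and define f : F_2^m × F_2^n → F_2 by f(y,x) = g(x) if y = (1,...,1) and h(x) otherwise. Then the nonlinearity satisfies N(f) ≥ (2^m − 1)·N(h) + N(g). -/
open Finset

/-- Hamming weight: number of inputs where `f` takes value 1. -/
def wt {α : Type*} [Fintype α] (f : α → ZMod 2) : ℕ :=
  (Finset.univ.filter fun x => f x = 1).card

/-- Fourier coefficient `𝓕(f) = ∑ x, (-1)^{f x}`. -/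
def Fcal {α : Type*} [Fintype α] (f : α → ZMod 2) : ℤ :=
  ∑ x, (-1 : ℤ) ^ (f x).val

/-- `f` is balanced: its weight is half the domain size. -/
def IsBalanced {α : Type*} [Fintype α] (f : α → ZMod 2) : Prop :=
  2 * wt f = Fintype.card α

/-- Dot product over `F_2`. -/
def dotp {n : ℕ} (a x : Fin n → ZMod 2) : ZMod 2 := ∑ i, a i * x i

/-- Walsh transform of `f` at `a`. -/
def walsh {n : ℕ} (f : (Fin n → ZMod 2) → ZMod 2) (a : Fin n → ZMod 2) : ℤ :=
  ∑ x, (-1 : ℤ) ^ (f x + dotp a x).val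

/-- First-order derivative `D_a f`. -/
def Dd {n : ℕ} (a : Fin n → ZMod 2) (f : (Fin n → ZMod 2) → ZMod 2) :
    (Fin n → ZMod 2) → ZMod 2 := fun x => f (x + a) + f x

/-- Second-order derivative `D_b D_a f`. -/
def DD {n : ℕ} (b a : Fin n → ZMod 2) (f : (Fin n → ZMod 2) → ZMod 2) :
    (Fin n → ZMod 2) → ZMod 2 :=
  fun x => f x + f (x + b) + f (x + a) + f (x + a + b)

/-- `M_a(f) = |Z_a(f)| - |U_a(f)|`. -/
def Mcal {n : ℕ} (a : Fin n → ZMod 2) (f : (Fin n → ZMod 2) → ZMod 2) : ℤ :=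
  ((Finset.univ.filter fun b : Fin n → ZMod 2 => ∀ x, DD b a f x = 0).card : ℤ) -
    ((Finset.univ.filter fun b : Fin n → ZMod 2 => ∀ x, DD b a f x = 1).card : ℤ)

/-- `f` has algebraic degree at most `d` (all ANF coefficients of monomials of
degree `> d` vanish). -/
def degLe {n : ℕ} (f : (Fin n → ZMod 2) → ZMod 2) (d : ℕ) : Prop :=
  ∀ S : Finset (Fin n), d < S.card →
    ∑ x ∈ Finset.univ.filter (fun x : Fin n → ZMod 2 => ∀ i, x i = 1 → i ∈ S), f x = 0

/-- Nonlinearity: minimal Hamming distance to an affine function. -/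
noncomputable def nonlin {n : ℕ} (f : (Fin n → ZMod 2) → ZMod 2) : ℕ :=
  sInf { d | ∃ (v : Fin n → ZMod 2) (c : ZMod 2), d = wt (fun x => f x + dotp v x + c) }

/-- Component function `F_λ = λ · F`. -/
def compF {n : ℕ} (F : (Fin n → ZMod 2) → (Fin n → ZMod 2)) (lam : Fin n → ZMod 2) :
    (Fin n → ZMod 2) → ZMod 2 := fun x => dotp lam (F x)

/-- `F` is almost perfect nonlinear. -/
def IsAPN {n : ℕ} (F : (Fin n → ZMod 2) → (Fin n → ZMod 2)) : Prop :=
  ∀ a : Fin n → ZMod 2, a ≠ 0 → ∀ b : Fin n → ZMod 2,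
    (Finset.univ.filter fun x => F (x + a) + F x = b).card ≤ 2

/-- Fourth power moment of the Walsh transform. -/
def L4 {n : ℕ} (F : (Fin n → ZMod 2) → (Fin n → ZMod 2)) : ℤ :=
  ∑ lam ∈ Finset.univ.filter (fun lam : Fin n → ZMod 2 => lam ≠ 0),
    ∑ a, (walsh (compF F lam) a) ^ 4

/-- Nonlinearity of a Boolean function on the product domain
`F_2^m × F_2^n ≅ F_2^{m+n}`. -/
noncomputable def nonlinP {m n : ℕ} (f : (Fin m → ZMod 2) × (Fin n → ZMod 2) → ZMod 2) : ℕ :=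
  sInf { d | ∃ (a : Fin m → ZMod 2) (b : Fin n → ZMod 2) (c : ZMod 2),
    d = wt (fun p : (Fin m → ZMod 2) × (Fin n → ZMod 2) =>
      f p + dotp a p.1 + dotp b p.2 + c) }

/-
On each slice `{y} × F_2^n` an affine function of `(y, x)` restricts to an affine function of
`x`. Hence the distance from `f` to any affine function is the sum of the slice distances: the
slice `y = (1,…,1)` contributes at least `N(g)`, and each of the other `2^m - 1` slices at
least `N(h)`.
-/

lemma wt_prod_eq_sum {α β : Type*} [Fintype α] [Fintype β] (F : α × β → ZMod 2) :
    wt F = ∑ y, wt fun x => F (y, x) := by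
  simp only [wt, card_filter, Fintype.sum_prod_type]

lemma nonlin_le_wt {n : ℕ} (h : (Fin n → ZMod 2) → ZMod 2) (b : Fin n → ZMod 2) (c : ZMod 2) :
    nonlin h ≤ wt fun x => h x + dotp b x + c :=
  Nat.sInf_le ⟨b, c, rfl⟩

lemma Fintype.sum_ite_eq_add_card_sub_one_mul {α : Type*} [Fintype α] [DecidableEq α] (a : α)
    (A B : ℕ) : ∑ y, (if y = a then A else B) = A + (Fintype.card α - 1) * B := by
  rw [← add_sum_erase univ _ (mem_univ a), if_pos rfl,
    sum_ite_of_false fun y hy => ne_of_mem_erase hy, sum_const, smul_eq_mul,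
    card_erase_of_mem (mem_univ a), card_univ]

theorem stmt8 (m n : ℕ) (g h : (Fin n → ZMod 2) → ZMod 2)
    (f : (Fin m → ZMod 2) × (Fin n → ZMod 2) → ZMod 2)
    (hf : ∀ y x, f (y, x) = if y = (fun _ => 1) then g x else h x) :
    nonlinP f ≥ (2 ^ m - 1) * nonlin h + nonlin g := by
  refine le_csInf ⟨_, 0, 0, 0, rfl⟩ ?_
  rintro d ⟨a, b, c, rfl⟩
  have slice_bound : ∀ y, (if y = (fun _ => 1) then nonlin g else nonlin h) ≤
      wt fun x => f (y, x) + dotp a y + dotp b x + c := by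
    intro y
    have slice_affine : (fun x => f (y, x) + dotp a y + dotp b x + c) =
        fun x => (if y = (fun _ => 1) then g x else h x) + dotp b x + (dotp a y + c) := by
      funext x
      rw [hf]
      ring
    rw [slice_affine]
    split_ifs <;> exact nonlin_le_wt _ b _
  have card_cube : Fintype.card (Fin m → ZMod 2) = 2 ^ m := by
    simp
  calc (2 ^ m - 1) * nonlin h + nonlin g
      = ∑ y : Fin m → ZMod 2, if y = (fun _ => 1) then nonlin g else nonlin h := by
        rw [Fintype.sum_ite_eq_add_card_sub_one_mul, card_cube, add_comm]
    _ ≤ _ := sum_le_sum fun y _ => slice_bound y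
    _ = _ := (wt_prod_eq_sum fun p => f p + dotp a p.1 + dotp b p.2 + c).symm
end

section
/- Let n = mk with m ≥ 2 and let f : (F_2^m)^k → F_2 be f(y_0,...,y_{k-1}) = Σ_{i=0}^{k-1} Π_{j=1}^m (y_i)_j. Then the nonlinearity of f equals 2^{n−1} − (2^m − 2)^k / 2. -/
open Finset

/-- Nonlinearity of a Boolean function on the domain `(F_2^m)^k ≅ F_2^{mk}`. -/
noncomputable def nonlinB {m k : ℕ} (f : (Fin k → Fin m → ZMod 2) → ZMod 2) : ℕ :=
  sInf { d | ∃ (a : Fin k → Fin m → ZMod 2) (c : ZMod 2),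
    d = wt (fun Y : Fin k → Fin m → ZMod 2 => f Y + (∑ i, ∑ j, a i j * Y i j) + c) }


/-!
Write `χ u = (-1)^u`. Since `f` is a sum of functions of disjoint blocks of variables, its
character sum against any affine function factors into a product over the `k` blocks of
Walsh coefficients of the AND function `g(y) = ∏ⱼ yⱼ` on `F_2^m`. As `g` is `0` except at the
all-ones vector, `W_g(b) = 2^m [b = 0] - 2 χ(∑ⱼ bⱼ)`, so for `m ≥ 2` we get `|W_g(b)| ≤ 2^m - 2`,
with equality at `b = 0`. Hence the largest Walsh value of `f` is `(2^m - 2)^k`, attained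
by the zero affine function, and `2 wt(f + a·Y + c) = 2^n - χ(c) W_f(a)` turns this into the weight.
-/

def chi (u : ZMod 2) : ℤ := (-1) ^ u.val

lemma chi_add : ∀ u v : ZMod 2, chi (u + v) = chi u * chi v := by decide

lemma chi_zero : chi 0 = 1 := rfl

lemma chi_one : chi 1 = -1 := rfl

lemma abs_chi : ∀ u : ZMod 2, |chi u| = 1 := by decide

lemma chi_sum {ι : Type*} (s : Finset ι) (u : ι → ZMod 2) :
    chi (∑ i ∈ s, u i) = ∏ i ∈ s, chi (u i) := by
  induction s using Finset.cons_induction with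
  | empty => rfl
  | cons a s ha ih => rw [Finset.sum_cons, Finset.prod_cons, chi_add, ih]

lemma two_mul_wt_eq_card_sub_Fcal {α : Type*} [Fintype α] (g : α → ZMod 2) :
    2 * (wt g : ℤ) = Fintype.card α - Fcal g := by
  have hchi : ∀ u : ZMod 2, (-1 : ℤ) ^ u.val = 1 - 2 * if u = 1 then 1 else 0 := by decide
  simp only [Fcal, hchi, Finset.sum_sub_distrib, ← Finset.mul_sum, Finset.sum_boole, wt,
    Finset.sum_const, Finset.card_univ, nsmul_eq_mul, mul_one]
  ring

lemma sum_chi_sum_apply {κ β : Type*} [Fintype κ] [DecidableEq κ] [Fintype β]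
    (h : κ → β → ZMod 2) :
    ∑ Y : κ → β, chi (∑ i, h i (Y i)) = ∏ i, ∑ y, chi (h i y) := by
  simp only [chi_sum]
  exact (Fintype.prod_sum fun i y => chi (h i y)).symm

section AndFunction

variable {ι : Type*} [Fintype ι] [DecidableEq ι]

lemma sum_chi_dotProduct (b : ι → ZMod 2) :
    ∑ y : ι → ZMod 2, chi (∑ j, b j * y j) = if b = 0 then 2 ^ Fintype.card ι else 0 := by
  have hcoord : ∀ c : ZMod 2, ∑ t : ZMod 2, chi (c * t) = if c = 0 then 2 else 0 := by decide
  rw [sum_chi_sum_apply fun j t => b j * t]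
  simp only [hcoord]
  split_ifs with hb
  · simp [hb]
  · obtain ⟨j, hj⟩ := Function.ne_iff.mp hb
    exact Finset.prod_eq_zero (Finset.mem_univ j) (if_neg hj)

def andWalsh (b : ι → ZMod 2) : ℤ :=
  ∑ y : ι → ZMod 2, chi ((∏ j, y j) + ∑ j, b j * y j)

lemma andWalsh_eq (b : ι → ZMod 2) :
    andWalsh b = (if b = 0 then 2 ^ Fintype.card ι else 0) - 2 * chi (∑ j, b j) := by
  -- adding `∏ j, y j` only flips the sign of the summand at the all-ones vector
  have hdiff : ∑ y : ι → ZMod 2, (chi (∑ j, b j * y j) - chi ((∏ j, y j) + ∑ j, b j * y j))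
      = 2 * chi (∑ j, b j) := by
    rw [Finset.sum_eq_single_of_mem (fun _ => 1) (Finset.mem_univ _)]
    · simp only [Finset.prod_const_one, mul_one, chi_add, chi_one]
      ring
    · intro y _ hy
      obtain ⟨j, hj⟩ := Function.ne_iff.mp hy
      have hj0 : y j = 0 := by revert hj; generalize y j = t; decide +revert
      rw [Finset.prod_eq_zero (Finset.mem_univ j) hj0, zero_add, sub_self]
  rw [Finset.sum_sub_distrib, sum_chi_dotProduct] at hdiff
  rw [andWalsh]
  linarith

lemma andWalsh_zero : andWalsh (0 : ι → ZMod 2) = 2 ^ Fintype.card ι - 2 := by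
  simp [andWalsh_eq, chi_zero]

lemma abs_andWalsh_le (hι : 2 ≤ Fintype.card ι) (b : ι → ZMod 2) :
    |andWalsh b| ≤ 2 ^ Fintype.card ι - 2 := by
  have h4 : (4 : ℤ) ≤ 2 ^ Fintype.card ι :=
    le_of_eq_of_le (by norm_num) (pow_le_pow_right₀ (by norm_num) hι)
  by_cases hb : b = 0
  · rw [hb, andWalsh_zero, abs_of_nonneg (by linarith)]
  · rw [andWalsh_eq, if_neg hb, zero_sub, abs_neg, abs_mul, abs_chi, abs_two]
    linarith

lemma prod_andWalsh_zero {κ : Type*} [Fintype κ] :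
    ∏ i : κ, andWalsh ((0 : κ → ι → ZMod 2) i) = (2 ^ Fintype.card ι - 2) ^ Fintype.card κ := by
  simp [andWalsh_zero]

lemma chi_mul_prod_andWalsh_le {κ : Type*} [Fintype κ] (hι : 2 ≤ Fintype.card ι) (c : ZMod 2)
    (a : κ → ι → ZMod 2) :
    chi c * ∏ i, andWalsh (a i) ≤ (2 ^ Fintype.card ι - 2) ^ Fintype.card κ := by
  calc chi c * ∏ i, andWalsh (a i)
      ≤ |chi c * ∏ i, andWalsh (a i)| := le_abs_self _
    _ = ∏ i, |andWalsh (a i)| := by rw [abs_mul, abs_chi, one_mul, Finset.abs_prod]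
    _ ≤ ∏ _i : κ, (2 ^ Fintype.card ι - 2) :=
      Finset.prod_le_prod (fun i _ => abs_nonneg _) fun i _ => abs_andWalsh_le hι (a i)
    _ = _ := by rw [Finset.prod_const, Finset.card_univ]

end AndFunction

lemma two_mul_wt_add_affine {m k : ℕ} (f : (Fin k → Fin m → ZMod 2) → ZMod 2)
    (hf : ∀ Y, f Y = ∑ i, ∏ j, Y i j) (a : Fin k → Fin m → ZMod 2) (c : ZMod 2) :
    2 * (wt fun Y => f Y + (∑ i, ∑ j, a i j * Y i j) + c : ℤ)
      = 2 ^ (m * k) - chi c * ∏ i, andWalsh (a i) := by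
  have hblocks : ∀ Y : Fin k → Fin m → ZMod 2, f Y + (∑ i, ∑ j, a i j * Y i j) + c
      = c + ∑ i, ((∏ j, Y i j) + ∑ j, a i j * Y i j) := by
    intro Y
    rw [hf, Finset.sum_add_distrib]
    ring
  have hfactor := sum_chi_sum_apply fun i (y : Fin m → ZMod 2) => (∏ j, y j) + ∑ j, a i j * y j
  rw [two_mul_wt_eq_card_sub_Fcal, Fintype.card_fun, Fintype.card_fun, ZMod.card,
    Fintype.card_fin, Fintype.card_fin, ← pow_mul]
  simp only [Fcal, hblocks, ← chi.eq_def, chi_add c, ← Finset.mul_sum, hfactor, andWalsh]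
  push_cast
  rfl

theorem stmt9_general (m k : ℕ) (hm : 2 ≤ m)
    (f : (Fin k → Fin m → ZMod 2) → ZMod 2)
    (hf : ∀ Y, f Y = ∑ i, ∏ j, Y i j) :
    2 * (nonlinB f : ℤ) = 2 ^ (m * k) - ((2 : ℤ) ^ m - 2) ^ k := by
  have hm' : 2 ≤ Fintype.card (Fin m) := by simpa using hm
  have hwt_zero := two_mul_wt_add_affine f hf 0 0
  rw [prod_andWalsh_zero, chi_zero, one_mul] at hwt_zero
  simp only [Fintype.card_fin] at hwt_zero
  have hleast : IsLeast {d | ∃ (a : Fin k → Fin m → ZMod 2) (c : ZMod 2),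
      d = wt fun Y => f Y + (∑ i, ∑ j, a i j * Y i j) + c}
      (wt fun Y => f Y + (∑ i, ∑ j, (0 : Fin k → Fin m → ZMod 2) i j * Y i j) + 0) := by
    refine ⟨⟨0, 0, rfl⟩, ?_⟩
    rintro _ ⟨a, c, rfl⟩
    have hle := chi_mul_prod_andWalsh_le hm' c a
    have hwt := two_mul_wt_add_affine f hf a c
    simp only [Fintype.card_fin] at hle
    zify
    linarith
  rw [nonlinB, hleast.csInf_eq, hwt_zero]

theorem stmt9 (m k : ℕ) (hm : 2 ≤ m) (hk : 1 ≤ k)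
    (f : (Fin k → Fin m → ZMod 2) → ZMod 2)
    (hf : ∀ Y, f Y = ∑ i, ∏ j, Y i j) :
    2 * (nonlinB f : ℤ) = 2 ^ (m * k) - ((2 : ℤ) ^ m - 2) ^ k :=
  stmt9_general m k hm f hf
end

section
/- Let F : F_2^n → F_2^n have algebraic degree 2 or 3. Then M(F) = Σ_{λ≠0} Σ_{b≠0} M_b(F_λ) ≥ 2^n(2^n − 1), and F is APN if and only if equality holds. -/
open Finset

/-!
Count `N = #{(a, b, x) | F x + F (x + b) + F (x + a) + F (x + a + b) = 0}` in two ways.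

Grouping by the value of the derivative `D_a F` gives `N = ∑_{a,c} δ(a, c) ^ 2` with
`δ(a, c) = #{x | F (x + a) + F x = c}`. For `a ≠ 0` every `δ(a, c)` is even and
`∑_c δ(a, c) = 2 ^ n`, so `δ(a, c) ^ 2 ≥ 2 δ(a, c)`, with equality for all `c` exactly when
`δ(a, ·) ≤ 2`.

Detecting `F x + … = 0` by the characters `λ ↦ (-1) ^ (λ · v)` gives
`2 ^ n N = ∑_{λ,a,b} ∑_x (-1) ^ (D_b D_a F_λ x)`. Derivatives lower the degree of the
algebraic normal form, so for components of degree at most `3` every `D_b D_a F_λ` is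
affine, and its character sum is `±2 ^ n` when it is constant and `0` otherwise: the inner
sum over `b` is `2 ^ n M_a(F_λ)`.
-/

lemma sum_card_fiber_sq {α β : Type*} [Fintype α] [Fintype β] [DecidableEq β] (u : α → β) :
    ∑ c, ((univ.filter fun x => u x = c).card : ℤ) ^ 2 =
      ∑ x, ∑ y, if u x = u y then 1 else 0 := by
  simp_rw [natCast_card_filter, sq, sum_mul_sum]
  rw [sum_comm]
  refine sum_congr rfl fun x _ => ?_
  rw [sum_comm]
  refine sum_congr rfl fun y _ => ?_
  simp [eq_comm]

lemma Finset.card_Icc_finset_cast_zmod_two {α : Type*} [DecidableEq α] (s t : Finset α) :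
    ((Icc s t).card : ZMod 2) = if s = t then 1 else 0 := by
  by_cases hst : s ⊆ t
  · rw [card_Icc_finset hst]
    split_ifs with h
    · simp [h]
    · have : t.card - s.card ≠ 0 := by
        have := card_lt_card (ssubset_of_subset_of_ne hst h)
        omega
      simp [this, show (2 : ZMod 2) = 0 from rfl]
  · rw [Icc_eq_empty hst, if_neg (fun h => hst h.le)]
    simp

namespace BooleanFunction

def chi (u : ZMod 2) : ℤ := (-1) ^ u.val

@[simp] lemma chi_zero : chi 0 = 1 := rfl

@[simp] lemma chi_one : chi 1 = -1 := rfl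

lemma chi_add : ∀ u v : ZMod 2, chi (u + v) = chi u * chi v := by decide

lemma Fcal_eq_sum_chi {α : Type*} [Fintype α] (f : α → ZMod 2) : Fcal f = ∑ x, chi (f x) :=
  rfl

lemma sum_chi_of_map_add {G : Type*} [AddGroup G] [Fintype G] {φ : G → ZMod 2}
    (hφ : ∀ x y, φ (x + y) = φ x + φ y) :
    ∑ x, chi (φ x) = if ∀ x, φ x = 0 then (Fintype.card G : ℤ) else 0 := by
  split_ifs with h
  · simp [h]
  · obtain ⟨x₀, hx₀⟩ := not_forall.mp h
    have hx₁ : φ x₀ = 1 := Fin.eq_one_of_ne_zero _ hx₀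
    have hflip : ∑ x, chi (φ x) = -∑ x, chi (φ x) := by
      calc ∑ x, chi (φ x) = ∑ x, chi (φ (x + x₀)) :=
            (Equiv.sum_comp (Equiv.addRight x₀) _).symm
        _ = -∑ x, chi (φ x) := by simp [hφ, chi_add, hx₁]
    linarith

section AlgebraicNormalForm

variable {n : ℕ}

def supp (x : Fin n → ZMod 2) : Finset (Fin n) := univ.filter fun i => x i = 1

lemma supp_subset_iff {x : Fin n → ZMod 2} {S : Finset (Fin n)} :
    supp x ⊆ S ↔ ∀ i, x i = 1 → i ∈ S := by
  simp [supp, subset_iff]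

lemma supp_injective : Function.Injective (supp (n := n)) := by
  intro x y h
  funext i
  have := Finset.ext_iff.mp h i
  simp only [supp, mem_filter, mem_univ, true_and] at this
  revert this
  generalize x i = u
  generalize y i = v
  revert u v
  decide

def mono (S : Finset (Fin n)) (x : Fin n → ZMod 2) : ZMod 2 := ∏ i ∈ S, x i

lemma mono_eq_ite (S : Finset (Fin n)) (x : Fin n → ZMod 2) :
    mono S x = if S ⊆ supp x then 1 else 0 := by
  split_ifs with h
  · exact prod_eq_one fun i hi => by simpa [supp] using h hi
  · obtain ⟨i, hiS, hix⟩ := not_subset.mp h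
    have hxi : x i ≠ 1 := by simpa [supp] using hix
    exact prod_eq_zero hiS ((by decide : ∀ u : ZMod 2, u ≠ 1 → u = 0) _ hxi)

def anfCoeff (f : (Fin n → ZMod 2) → ZMod 2) (S : Finset (Fin n)) : ZMod 2 :=
  ∑ x ∈ univ.filter (fun x : Fin n → ZMod 2 => ∀ i, x i = 1 → i ∈ S), f x

/-- Möbius inversion on the Boolean lattice: mod 2, `supp y ⊆ S ⊆ supp x` has
`2 ^ (|x| - |y|)` solutions `S`, an odd number only when `y = x`. -/
lemma sum_anfCoeff_smul_mono (f : (Fin n → ZMod 2) → ZMod 2) :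
    ∑ S, anfCoeff f S • mono S = f := by
  funext x
  calc (∑ S, anfCoeff f S • mono S) x
      = ∑ S, ∑ y, if S ⊆ supp x ∧ supp y ⊆ S then f y else 0 := by
        simp only [Finset.sum_apply, Pi.smul_apply, smul_eq_mul, anfCoeff, sum_filter,
          mono_eq_ite, ← supp_subset_iff, ite_and, mul_ite, mul_one, mul_zero, sum_ite_irrel,
          sum_const_zero]
    _ = ∑ y, f y * ((Icc (supp y) (supp x)).card : ZMod 2) := by
        rw [sum_comm]
        refine sum_congr rfl fun y _ => ?_
        rw [← sum_filter, sum_const, nsmul_eq_mul, mul_comm]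
        congr 3
        ext S
        simp [and_comm]
    _ = f x := by
        simp [card_Icc_finset_cast_zmod_two, supp_injective.eq_iff]

def monoSpan (n d : ℕ) : Submodule (ZMod 2) ((Fin n → ZMod 2) → ZMod 2) :=
  Submodule.span (ZMod 2) {f | ∃ S : Finset (Fin n), S.card ≤ d ∧ mono S = f}

lemma mem_monoSpan_of_degLe {f : (Fin n → ZMod 2) → ZMod 2} {d : ℕ} (hf : degLe f d) :
    f ∈ monoSpan n d := by
  rw [← sum_anfCoeff_smul_mono f]
  refine Submodule.sum_mem _ fun S _ => ?_
  by_cases hS : S.card ≤ d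
  · exact Submodule.smul_mem _ _ (Submodule.subset_span ⟨S, hS, rfl⟩)
  · rw [show anfCoeff f S = 0 from hf S (not_le.mp hS), zero_smul]
    exact Submodule.zero_mem _

lemma apply_eq_of_mem_monoSpan_zero {f : (Fin n → ZMod 2) → ZMod 2} (hf : f ∈ monoSpan n 0)
    (x y : Fin n → ZMod 2) : f x = f y := by
  have hgen : {f | ∃ S : Finset (Fin n), S.card ≤ 0 ∧ mono S = f} = {1} := by
    ext f
    simp [mono, eq_comm, funext_iff]
  rw [monoSpan, hgen, Submodule.mem_span_singleton] at hf
  obtain ⟨c, rfl⟩ := hf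
  rfl

def derivLinear (a : Fin n → ZMod 2) :
    ((Fin n → ZMod 2) → ZMod 2) →ₗ[ZMod 2] ((Fin n → ZMod 2) → ZMod 2) where
  toFun := Dd a
  map_add' f g := by
    funext x
    simp only [Dd, Pi.add_apply]
    ring
  map_smul' c f := by
    funext x
    simp only [Dd, Pi.smul_apply, smul_eq_mul, RingHom.id_apply]
    ring

/-- Expand `∏ i ∈ S, (x i + a i)`: the term `U = ∅` is `mono S x`, which cancels. -/
lemma Dd_mono (a : Fin n → ZMod 2) (S : Finset (Fin n)) :
    Dd a (mono S) = ∑ U ∈ S.powerset.erase ∅, (∏ i ∈ U, a i) • mono (S \ U) := by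
  funext x
  have hexpand : mono S (x + a) = ∑ U ∈ S.powerset, (∏ i ∈ U, a i) * mono (S \ U) x := by
    simp only [mono, Pi.add_apply, add_comm (x _), prod_add]
  rw [Dd, hexpand, ← add_sum_erase _ _ (empty_mem_powerset S), prod_empty, sdiff_empty, one_mul,
    add_comm (mono S x), add_assoc, CharTwo.add_self_eq_zero, add_zero, Finset.sum_apply]
  rfl

lemma Dd_mono_mem_monoSpan (a : Fin n → ZMod 2) {S : Finset (Fin n)} {d : ℕ}
    (hS : S.card ≤ d + 1) : Dd a (mono S) ∈ monoSpan n d := by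
  rw [Dd_mono]
  refine Submodule.sum_mem _ fun U hU => Submodule.smul_mem _ _ (Submodule.subset_span ?_)
  obtain ⟨hU, hUS⟩ := mem_erase.mp hU
  refine ⟨S \ U, ?_, rfl⟩
  have := card_pos.mpr (nonempty_iff_ne_empty.mpr hU)
  rw [card_sdiff_of_subset (mem_powerset.mp hUS)]
  omega

lemma Dd_mem_monoSpan (a : Fin n → ZMod 2) {f : (Fin n → ZMod 2) → ZMod 2} {d : ℕ}
    (hf : f ∈ monoSpan n (d + 1)) : Dd a f ∈ monoSpan n d := by
  suffices monoSpan n (d + 1) ≤ (monoSpan n d).comap (derivLinear a) from this hf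
  rw [monoSpan, Submodule.span_le]
  rintro _ ⟨S, hS, rfl⟩
  exact Dd_mono_mem_monoSpan a hS

lemma Dd_Dd (a b : Fin n → ZMod 2) (g : (Fin n → ZMod 2) → ZMod 2) :
    Dd b (Dd a g) = DD b a g := by
  funext x
  simp only [Dd, DD, add_right_comm x b a]
  ring

lemma Dd_DD_eq_of_degLe {g : (Fin n → ZMod 2) → ZMod 2} (hg : degLe g 3)
    (a b c x y : Fin n → ZMod 2) : Dd c (DD b a g) x = Dd c (DD b a g) y := by
  rw [← Dd_Dd]
  exact apply_eq_of_mem_monoSpan_zero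
    (Dd_mem_monoSpan c (Dd_mem_monoSpan b (Dd_mem_monoSpan a (mem_monoSpan_of_degLe hg)))) x y

end AlgebraicNormalForm

section Walsh

lemma ite_forall_sub_ite_forall {G : Type*} [Zero G] [Fintype G] (h : G → ZMod 2) :
    ((if ∀ x, h x = 0 then 1 else 0) - if ∀ x, h x = 1 then 1 else 0 : ℤ) =
      if ∀ x, h x + h 0 = 0 then chi (h 0) else 0 := by
  simp only [CharTwo.add_eq_zero]
  rcases (by decide : ∀ u : ZMod 2, u = 0 ∨ u = 1) (h 0) with h0 | h0 <;>
    by_cases hconst : ∀ x, h x = h 0 <;> simp_all <;> grind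

/-- `h - h 0` is additive, so `Fcal h` is `chi (h 0)` times a character sum. -/
lemma Fcal_of_affine {G : Type*} [AddCommGroup G] [Fintype G] {h : G → ZMod 2}
    (hh : ∀ x y, h (x + y) + h x = h y + h 0) :
    Fcal h =
      Fintype.card G * ((if ∀ x, h x = 0 then 1 else 0) - if ∀ x, h x = 1 then 1 else 0) := by
  have hlin : ∀ x y, h (x + y) + h 0 = (h x + h 0) + (h y + h 0) := fun x y => by
    have := hh x y
    grind
  calc Fcal h = ∑ x, chi (h 0) * chi (h x + h 0) := by
        rw [Fcal_eq_sum_chi]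
        refine sum_congr rfl fun x _ => ?_
        rw [← chi_add, add_comm (h x), CharTwo.add_cancel_left]
    _ = _ := by
        rw [← mul_sum, sum_chi_of_map_add hlin, ite_forall_sub_ite_forall]
        split_ifs <;> ring

variable {n : ℕ}

lemma card_vec : Fintype.card (Fin n → ZMod 2) = 2 ^ n := by simp

lemma sum_Fcal_DD_of_degLe {g : (Fin n → ZMod 2) → ZMod 2} (hg : degLe g 3)
    (a : Fin n → ZMod 2) : ∑ b, Fcal (DD b a g) = 2 ^ n * Mcal a g := by
  have haff : ∀ b, Fcal (DD b a g) = 2 ^ n *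
      ((if ∀ x, DD b a g x = 0 then 1 else 0) - if ∀ x, DD b a g x = 1 then 1 else 0) :=
    fun b => by
      rw [Fcal_of_affine fun x y => by simpa [Dd] using Dd_DD_eq_of_degLe hg a b y x 0, card_vec]
      push_cast
      rfl
  simp only [haff, ← mul_sum, Mcal, natCast_card_filter, sum_sub_distrib]

end Walsh

section Counting

variable {n : ℕ}

lemma dotp_add_right (a x y : Fin n → ZMod 2) : dotp a (x + y) = dotp a x + dotp a y :=
  dotProduct_add a x y

lemma sum_chi_dotp (v : Fin n → ZMod 2) :
    ∑ lam, chi (dotp lam v) = if v = 0 then 2 ^ n else 0 := by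
  have hzero : (∀ lam, dotp lam v = 0) ↔ v = 0 := by
    refine ⟨fun h => funext fun i => ?_, fun h lam => by simp [h, dotp]⟩
    simpa [dotp, Pi.single_apply] using h (Pi.single i 1)
  rw [sum_chi_of_map_add fun lam mu => add_dotProduct lam mu v, card_vec]
  simp only [hzero]
  push_cast
  rfl

variable (F : (Fin n → ZMod 2) → (Fin n → ZMod 2))

def secondDiffZeroCount : ℤ :=
  ∑ a, ∑ b, ∑ x, if F x + F (x + b) + F (x + a) + F (x + a + b) = 0 then 1 else 0

def diffCount (a c : Fin n → ZMod 2) : ℕ := (univ.filter fun x => F (x + a) + F x = c).card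

lemma DD_compF (lam a b x : Fin n → ZMod 2) :
    DD b a (compF F lam) x = dotp lam (F x + F (x + b) + F (x + a) + F (x + a + b)) := by
  simp only [DD, compF, dotp_add_right]

lemma sum_Fcal_DD_compF :
    ∑ lam, ∑ a, ∑ b, Fcal (DD b a (compF F lam)) = 2 ^ n * secondDiffZeroCount F := by
  simp only [Fcal_eq_sum_chi, DD_compF, secondDiffZeroCount, mul_sum]
  rw [sum_comm]
  refine sum_congr rfl fun a _ => ?_
  rw [sum_comm]
  refine sum_congr rfl fun b _ => ?_
  rw [sum_comm]
  refine sum_congr rfl fun x _ => ?_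
  rw [sum_chi_dotp]
  split_ifs <;> simp

lemma secondDiffZeroCount_eq_sum_sq :
    secondDiffZeroCount F = ∑ a, ∑ c, (diffCount F a c : ℤ) ^ 2 := by
  refine sum_congr rfl fun a _ => ?_
  unfold diffCount
  rw [sum_card_fiber_sq (fun x => F (x + a) + F x), sum_comm]
  refine sum_congr rfl fun x _ => ?_
  refine Fintype.sum_equiv (Equiv.addLeft x) _ _ fun b => ?_
  have hquad : F x + F (x + b) + F (x + a) + F (x + a + b) =
      (F (x + a) + F x) + (F (x + b + a) + F (x + b)) := by
    rw [add_right_comm x b a]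
    abel
  exact if_congr (by rw [hquad, add_eq_zero_iff_eq_neg, ZModModule.neg_eq_self]; rfl) rfl rfl

lemma sum_diffCount (a : Fin n → ZMod 2) : ∑ c, (diffCount F a c : ℤ) = 2 ^ n := by
  unfold diffCount
  exact_mod_cast
    (card_eq_sum_card_fiberwise fun _ _ => mem_coe.mpr (mem_univ _)).symm.trans card_vec

lemma diffCount_zero_left (c : Fin n → ZMod 2) :
    diffCount F 0 c = if c = 0 then 2 ^ n else 0 := by
  simp only [diffCount, add_zero, ZModModule.add_self]
  split_ifs with hc <;> simp [hc, eq_comm]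

lemma even_diffCount {a : Fin n → ZMod 2} (ha : a ≠ 0) (c : Fin n → ZMod 2) :
    Even (diffCount F a c) := by
  rw [even_iff_two_dvd, ← ZMod.natCast_eq_zero_iff, diffCount, card_eq_sum_ones, Nat.cast_sum,
    Nat.cast_one]
  refine sum_involution (fun x _ => x + a) (fun _ _ => rfl)
    (fun x _ _ hx => ha (by simpa using hx)) (fun x hx => ?_)
    (fun x _ => by simp [add_assoc, ZModModule.add_self])
  simp_all [add_assoc, ZModModule.add_self, add_comm (F x)]

end Counting

section APN

variable {n : ℕ}

lemma sum_eq_add_sum_ne_zero (f : (Fin n → ZMod 2) → ℤ) :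
    ∑ x, f x = f 0 + ∑ x ∈ univ.filter (· ≠ 0), f x := by
  rw [filter_ne', add_sum_erase _ _ (mem_univ 0)]

lemma card_filter_ne_zero :
    ((univ.filter fun x : Fin n → ZMod 2 => x ≠ 0).card : ℤ) = 2 ^ n - 1 := by
  rw [filter_ne', card_erase_of_mem (mem_univ 0), card_univ, card_vec,
    Nat.cast_sub Nat.one_le_two_pow]
  push_cast
  rfl

lemma Mcal_of_DD_eq_zero {a : Fin n → ZMod 2} {g : (Fin n → ZMod 2) → ZMod 2}
    (h : ∀ b x, DD b a g x = 0) : Mcal a g = 2 ^ n := by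
  simp [Mcal, h]

lemma mul_sub_two_nonneg_of_even {d : ℕ} (hd : Even d) : 0 ≤ (d : ℤ) * (d - 2) := by
  obtain ⟨r, rfl⟩ := hd
  rcases Nat.eq_zero_or_pos r with rfl | hr
  · simp
  · exact mul_nonneg (by positivity) (by push_cast; omega)

lemma mul_sub_two_eq_zero_iff_of_even {d : ℕ} (hd : Even d) :
    (d : ℤ) * (d - 2) = 0 ↔ d ≤ 2 := by
  obtain ⟨r, rfl⟩ := hd
  rw [mul_eq_zero, sub_eq_zero]
  omega

variable (F : (Fin n → ZMod 2) → (Fin n → ZMod 2))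

def diffExcess : ℤ :=
  ∑ a ∈ univ.filter (· ≠ 0), ∑ c, (diffCount F a c : ℤ) * (diffCount F a c - 2)

lemma diffExcess_nonneg : 0 ≤ diffExcess F :=
  sum_nonneg fun _ ha => sum_nonneg fun c _ =>
    mul_sub_two_nonneg_of_even (even_diffCount F (mem_filter.mp ha).2 c)

lemma isAPN_iff_diffExcess_eq_zero : IsAPN F ↔ diffExcess F = 0 := by
  rw [diffExcess, sum_eq_zero_iff_of_nonneg fun a ha => sum_nonneg fun c _ =>
    mul_sub_two_nonneg_of_even (even_diffCount F (mem_filter.mp ha).2 c)]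
  refine forall_congr' fun a => ?_
  simp only [mem_filter, mem_univ, true_and]
  refine forall_congr' fun ha => ?_
  rw [sum_eq_zero_iff_of_nonneg fun c _ => mul_sub_two_nonneg_of_even (even_diffCount F ha c)]
  simp only [mem_univ, true_implies, mul_sub_two_eq_zero_iff_of_even (even_diffCount F ha _)]
  rfl

lemma secondDiffZeroCount_eq_diffExcess :
    secondDiffZeroCount F = 2 ^ n * 2 ^ n + 2 * 2 ^ n * (2 ^ n - 1) + diffExcess F := by
  have hexcess : ∀ a, ∑ c, (diffCount F a c : ℤ) * (diffCount F a c - 2) =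
      ∑ c, (diffCount F a c : ℤ) ^ 2 - 2 * 2 ^ n := fun a => by
    rw [← sum_diffCount F a, mul_sum, ← sum_sub_distrib]
    exact sum_congr rfl fun c _ => by ring
  have hzero : ∑ c, (diffCount F 0 c : ℤ) ^ 2 = 2 ^ n * 2 ^ n := by
    simp [diffCount_zero_left, sq]
  rw [secondDiffZeroCount_eq_sum_sq, sum_eq_add_sum_ne_zero, hzero, diffExcess,
    sum_congr rfl fun a _ => hexcess a, sum_sub_distrib, sum_const, nsmul_eq_mul,
    card_filter_ne_zero]
  ring

lemma secondDiffZeroCount_eq_sum_Mcal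
    (hdeg : ∀ lam : Fin n → ZMod 2, lam ≠ 0 → degLe (compF F lam) 3) :
    secondDiffZeroCount F = 2 ^ n * 2 ^ n + 2 ^ n * (2 ^ n - 1) +
      ∑ lam ∈ univ.filter (· ≠ 0), ∑ b ∈ univ.filter (· ≠ 0), Mcal b (compF F lam) := by
  have hdeg' : ∀ lam, degLe (compF F lam) 3 := fun lam => by
    rcases eq_or_ne lam 0 with rfl | hlam
    · intro S _
      simp [compF, dotp]
    · exact hdeg lam hlam
  have hcount : secondDiffZeroCount F = ∑ lam, ∑ a, Mcal a (compF F lam) := by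
    refine mul_left_cancel₀ (pow_ne_zero n two_ne_zero) ?_
    simp only [← sum_Fcal_DD_compF, sum_Fcal_DD_of_degLe (hdeg' _), mul_sum]
  have hzero_fun : ∀ a, Mcal a (compF F 0) = 2 ^ n := fun a =>
    Mcal_of_DD_eq_zero fun b x => by simp [DD, compF, dotp]
  have hzero_dir : ∀ lam, Mcal 0 (compF F lam) = 2 ^ n := fun lam =>
    Mcal_of_DD_eq_zero fun b x => by
      simp only [DD, add_zero]
      grind
  rw [hcount, sum_eq_add_sum_ne_zero, sum_congr rfl fun lam _ => sum_eq_add_sum_ne_zero _,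
    sum_add_distrib]
  simp only [hzero_fun, hzero_dir, sum_const, card_univ, card_vec, nsmul_eq_mul,
    card_filter_ne_zero]
  push_cast
  ring

end APN

end BooleanFunction

theorem stmt18 (n : ℕ) (F : (Fin n → ZMod 2) → (Fin n → ZMod 2))
    (hdeg : (∀ lam : Fin n → ZMod 2, lam ≠ 0 → degLe (compF F lam) 3) ∧
      ¬ (∀ lam : Fin n → ZMod 2, lam ≠ 0 → degLe (compF F lam) 1)) :
    (∑ lam ∈ Finset.univ.filter (fun lam : Fin n → ZMod 2 => lam ≠ 0),
        ∑ b ∈ Finset.univ.filter (fun b : Fin n → ZMod 2 => b ≠ 0),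
          Mcal b (compF F lam)) ≥ 2 ^ n * ((2 : ℤ) ^ n - 1) ∧
    (IsAPN F ↔
      (∑ lam ∈ Finset.univ.filter (fun lam : Fin n → ZMod 2 => lam ≠ 0),
        ∑ b ∈ Finset.univ.filter (fun b : Fin n → ZMod 2 => b ≠ 0),
          Mcal b (compF F lam)) = 2 ^ n * ((2 : ℤ) ^ n - 1)) := by
  have hsum := (BooleanFunction.secondDiffZeroCount_eq_sum_Mcal F hdeg.1).symm.trans
    (BooleanFunction.secondDiffZeroCount_eq_diffExcess F)
  rw [BooleanFunction.isAPN_iff_diffExcess_eq_zero]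
  constructor
  · linarith [BooleanFunction.diffExcess_nonneg F]
  · constructor <;> intro h <;> linarith
end

section
/- Let F : F_2^n → F_2^n be a vectorial Boolean function. Then Σ_{λ≠0} Σ_{b,c ∈ F_2^n} 𝓕(D_b D_c F_λ) ≥ 2^{2n+1}(2^n − 1), with equality if and only if F is APN. -/
open Finset

/-! Summing over all `λ`, including `λ = 0`, and using `∑_λ (-1)^{λ·v} = 2^n [v = 0]`, the
left-hand side plus `2^{3n}` is `2^n` times the number of triples `(b, c, x)` with
`F x + F (x+b) + F (x+c) + F (x+c+b) = 0`. For fixed `b, x` these `c` correspond, via `y = x + c`,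
to the solutions of `D_b F y = D_b F x`: all `2^n` points when `b = 0`, and at least the two points
`x, x + b` otherwise, with never more than two exactly when `F` is APN. -/

section DifferenceCounts

variable {G H : Type*} [AddCommGroup G] [Fintype G] [AddCommGroup H] [DecidableEq H]

def diffCount (F : G → H) (a : G) (v : H) : ℕ :=
  #{x | F (x + a) + F x = v}

lemma diffCount_zero_zero [Module (ZMod 2) H] (F : G → H) :
    diffCount F 0 0 = Fintype.card G := by
  simp [diffCount, ZModModule.add_self]

lemma two_le_diffCount [Module (ZMod 2) G] [DecidableEq G] (F : G → H) {a : G} (ha : a ≠ 0)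
    (x : G) : 2 ≤ diffCount F a (F (x + a) + F x) := by
  have hx : x ≠ x + a := fun h => ha (left_eq_add.mp h)
  calc 2 = #{x, x + a} := (card_pair hx).symm
    _ ≤ diffCount F a (F (x + a) + F x) := by
      refine card_le_card fun y hy => ?_
      rcases mem_insert.mp hy with rfl | hy
      · simp
      · simp only [mem_filter, mem_univ, true_and, mem_singleton.mp hy]
        rw [add_assoc, ZModModule.add_self, add_zero, add_comm]

lemma card_secondDiff_eq_zero [Module (ZMod 2) H] (F : G → H) (b x : G) :
    #{c | F x + F (x + b) + F (x + c) + F (x + c + b) = 0} =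
      diffCount F b (F (x + b) + F x) := by
  refine card_equiv (Equiv.addLeft x) fun c => ?_
  simp only [mem_filter, mem_univ, true_and, Equiv.coe_addLeft]
  rw [← sub_eq_zero (a := F (x + c + b) + F (x + c)), ZModModule.sub_eq_add]
  constructor <;> intro h <;> rw [← h] <;> abel

def diffExcess [DecidableEq G] (F : G → H) : ℤ :=
  ∑ a ∈ univ.erase 0, ∑ x, ((diffCount F a (F (x + a) + F x) : ℤ) - 2)

lemma sum_diffCount [DecidableEq G] [Module (ZMod 2) H] (F : G → H) :
    ∑ a, ∑ x, (diffCount F a (F (x + a) + F x) : ℤ) =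
      Fintype.card G ^ 2 + 2 * Fintype.card G * (Fintype.card G - 1) + diffExcess F := by
  rw [← add_sum_erase _ _ (mem_univ 0), diffExcess]
  simp only [add_zero, ZModModule.add_self, diffCount_zero_zero, sum_sub_distrib, sum_const,
    card_erase_of_mem (mem_univ _), card_univ, nsmul_eq_mul]
  push_cast [Nat.cast_sub Fintype.card_pos]
  ring

section Char2

variable [Module (ZMod 2) G] [DecidableEq G]

lemma diffExcess_term_nonneg (F : G → H) {a : G} (ha : a ≠ 0) (x : G) :
    0 ≤ (diffCount F a (F (x + a) + F x) : ℤ) - 2 := by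
  have := two_le_diffCount F ha x
  omega

lemma diffExcess_nonneg (F : G → H) : 0 ≤ diffExcess F :=
  sum_nonneg fun _ ha => sum_nonneg fun x _ => diffExcess_term_nonneg F (ne_of_mem_erase ha) x

lemma diffExcess_eq_zero_iff (F : G → H) :
    diffExcess F = 0 ↔ ∀ a ≠ 0, ∀ x, diffCount F a (F (x + a) + F x) ≤ 2 := by
  rw [diffExcess, sum_eq_zero_iff_of_nonneg fun a ha =>
    sum_nonneg fun x _ => diffExcess_term_nonneg F (ne_of_mem_erase ha) x]
  refine forall_congr' fun a => ?_
  rw [mem_erase, and_iff_left (mem_univ a)]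
  refine imp_congr_right fun ha => ?_
  rw [sum_eq_zero_iff_of_nonneg fun x _ => diffExcess_term_nonneg F ha x]
  refine forall_congr' fun x => ?_
  have := two_le_diffCount F ha x
  simp only [mem_univ, true_implies]
  omega

end Char2

end DifferenceCounts

section APN

variable {n : ℕ}

lemma dotp_eq_dotProduct (a x : Fin n → ZMod 2) : dotp a x = a ⬝ᵥ x := rfl

lemma neg_one_pow_val_add_one (t : ZMod 2) : (-1 : ℤ) ^ (t + 1).val = -(-1) ^ t.val := by
  fin_cases t <;> rfl

lemma sum_neg_one_pow_dotp (v : Fin n → ZMod 2) :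
    ∑ lam, (-1 : ℤ) ^ (dotp lam v).val = if v = 0 then 2 ^ n else 0 := by
  split_ifs with hv
  · simp [hv, dotp]
  · obtain ⟨i, hi⟩ := Function.ne_iff.mp hv
    let e : Fin n → ZMod 2 := Pi.single i 1
    have he : e ⬝ᵥ v = 1 := by rw [single_one_dotProduct]; exact Fin.eq_one_of_ne_zero _ hi
    set S := ∑ lam, (-1 : ℤ) ^ (dotp lam v).val
    -- translating `lam` by `e` flips every sign
    have : S = -S := calc
      S = ∑ lam, (-1 : ℤ) ^ (dotp (lam + e) v).val :=
        (Equiv.sum_comp (Equiv.addRight e) fun lam => (-1 : ℤ) ^ (dotp lam v).val).symm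
      _ = -S := by
        simp only [dotp_eq_dotProduct, add_dotProduct, he, neg_one_pow_val_add_one,
          sum_neg_distrib, S]
    linarith

lemma Fcal_DD_compF (F : (Fin n → ZMod 2) → Fin n → ZMod 2) (lam b c : Fin n → ZMod 2) :
    Fcal (DD b c (compF F lam)) =
      ∑ x, (-1 : ℤ) ^ (dotp lam (F x + F (x + b) + F (x + c) + F (x + c + b))).val := by
  simp only [Fcal, DD, compF, dotp_eq_dotProduct, dotProduct_add]

lemma sum_Fcal_DD_compF (F : (Fin n → ZMod 2) → Fin n → ZMod 2) :
    ∑ lam, ∑ b, ∑ c, Fcal (DD b c (compF F lam)) =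
      2 ^ n * ∑ b, ∑ x, (diffCount F b (F (x + b) + F x) : ℤ) := by
  calc ∑ lam, ∑ b, ∑ c, Fcal (DD b c (compF F lam))
      = ∑ b, ∑ c, ∑ x, ∑ lam,
          (-1 : ℤ) ^ (dotp lam (F x + F (x + b) + F (x + c) + F (x + c + b))).val := by
        simp only [Fcal_DD_compF]
        rw [sum_comm]
        refine sum_congr rfl fun b _ => ?_
        rw [sum_comm]
        exact sum_congr rfl fun c _ => sum_comm
    _ = ∑ b, ∑ x, ∑ c, if F x + F (x + b) + F (x + c) + F (x + c + b) = 0 then 2 ^ n else 0 := by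
        simp only [sum_neg_one_pow_dotp]
        exact sum_congr rfl fun b _ => sum_comm
    _ = 2 ^ n * ∑ b, ∑ x, (diffCount F b (F (x + b) + F x) : ℤ) := by
        simp only [sum_ite, sum_const_zero, add_zero, sum_const, nsmul_eq_mul,
          card_secondDiff_eq_zero, mul_sum, mul_comm]

lemma sum_Fcal_DD_compF_zero (F : (Fin n → ZMod 2) → Fin n → ZMod 2) :
    ∑ b, ∑ c, Fcal (DD b c (compF F 0)) = 2 ^ (3 * n) := by
  simp only [Fcal_DD_compF, dotp_eq_dotProduct, zero_dotProduct, ZMod.val_zero, pow_zero,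
    sum_const, card_univ, Fintype.card_fun, ZMod.card, Fintype.card_fin, nsmul_eq_mul, mul_one]
  push_cast
  ring

lemma sum_Fcal_DD_compF_ne_zero (F : (Fin n → ZMod 2) → Fin n → ZMod 2) :
    ∑ lam ∈ univ.filter (fun lam : Fin n → ZMod 2 => lam ≠ 0), ∑ b, ∑ c,
        Fcal (DD b c (compF F lam)) =
      2 ^ (2 * n + 1) * ((2 : ℤ) ^ n - 1) + 2 ^ n * diffExcess F := by
  rw [filter_ne', sum_erase_eq_sub (mem_univ _), sum_Fcal_DD_compF, sum_Fcal_DD_compF_zero,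
    sum_diffCount]
  simp only [Fintype.card_fun, ZMod.card, Fintype.card_fin]
  push_cast
  ring

lemma isAPN_iff_diffCount_le_two (F : (Fin n → ZMod 2) → Fin n → ZMod 2) :
    IsAPN F ↔ ∀ a ≠ 0, ∀ x, diffCount F a (F (x + a) + F x) ≤ 2 := by
  refine ⟨fun h a ha x => h a ha _, fun h a ha v => ?_⟩
  obtain hempty | ⟨x, hx⟩ := (univ.filter fun x => F (x + a) + F x = v).eq_empty_or_nonempty
  · simp [hempty]
  · rw [← (mem_filter.mp hx).2]
    exact h a ha x

end APN

theorem stmt19 (n : ℕ) (F : (Fin n → ZMod 2) → (Fin n → ZMod 2)) :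
    (∑ lam ∈ Finset.univ.filter (fun lam : Fin n → ZMod 2 => lam ≠ 0),
        ∑ b : Fin n → ZMod 2, ∑ c : Fin n → ZMod 2,
          Fcal (DD b c (compF F lam))) ≥ 2 ^ (2 * n + 1) * ((2 : ℤ) ^ n - 1) ∧
    ((∑ lam ∈ Finset.univ.filter (fun lam : Fin n → ZMod 2 => lam ≠ 0),
        ∑ b : Fin n → ZMod 2, ∑ c : Fin n → ZMod 2,
          Fcal (DD b c (compF F lam))) = 2 ^ (2 * n + 1) * ((2 : ℤ) ^ n - 1) ↔
      IsAPN F) := by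
  have hpos : (0 : ℤ) < 2 ^ n := by positivity
  rw [sum_Fcal_DD_compF_ne_zero, isAPN_iff_diffCount_le_two, ← diffExcess_eq_zero_iff]
  refine ⟨le_add_of_nonneg_right (mul_nonneg hpos.le (diffExcess_nonneg F)), ?_⟩
  rw [add_eq_left, mul_eq_zero, or_iff_right hpos.ne']
end
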